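/- CTL is strictly less expressive than Strategic Construction Logic (SCL): (i) every CTL formula has an equivalent SCL formula (obtained by the recursive translation that maps AXφ to ⟨∠⁰⟩Xφ, A(φUχ) to ⟨∠⁰⟩(φUχ), A(φRχ) to ⟨∠⁰⟩(φRχ), dualizes for E, and commutes with atoms and Boolean connectives); and (ii) the SCL formula ⟨∠¹⟩X[∠⁰]X¬p has no equivalent CTL formula. -/

import Mathlib

set_option linter.unusedVariables false

/-! ## Models -/

structure Mdl (S : Type) where
  rel : S → S → Prop
  val : ℕ → Set S
  cost : S → S → ℕ

namespace Mdl
variable {S : Type}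

/-- A proper model: serial relation and positive costs. -/
def IsModel (M : Mdl S) : Prop := (∀ s, ∃ t, M.rel s t) ∧ ∀ s t, 0 < M.cost s t

def Serial (M : Mdl S) : Prop := ∀ s, ∃ t, M.rel s t

def remove (M : Mdl S) (A : Set (S × S)) : Mdl S :=
  { M with rel := fun a b => M.rel a b ∧ (a, b) ∉ A }

def add (M : Mdl S) (A : Set (S × S)) : Mdl S :=
  { M with rel := fun a b => M.rel a b ∨ (a, b) ∈ A }

/-- The set of edges `A` is finite with total cost at most `n`. -/
def costLe (M : Mdl S) (A : Set (S × S)) (n : ℕ) : Prop :=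
  ∃ F : Finset (S × S), A = ↑F ∧ ∑ e ∈ F, M.cost e.1 e.2 ≤ n

end Mdl

abbrev PModel (S : Type) := Mdl S × S
abbrev Strat (S : Type) := PModel S → Set (S × S)
abbrev MPath (S : Type) := ℕ → PModel S

/-- A demonic strategy outputs a subset of the edges of the given model. -/
def IsDemonic {S : Type} (σ : Strat S) : Prop :=
  ∀ Ms : PModel S, σ Ms ⊆ {e : S × S | Ms.1.rel e.1 e.2}

/-- An angelic strategy outputs a set of non-edges of the given model. -/
def IsAngelic {S : Type} (σ : Strat S) : Prop :=
  ∀ Ms : PModel S, σ Ms ⊆ {e : S × S | ¬ Ms.1.rel e.1 e.2}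

/-! ### Demonic (SDL) paths -/

def DStep {S : Type} (σ : Strat S) (x y : PModel S) : Prop :=
  y.1 = x.1.remove (σ x) ∧ y.1.Serial ∧ y.1.rel x.2 y.2

def DCompat {S : Type} (σ : Strat S) (π : MPath S) : Prop := ∀ i, DStep σ (π i) (π (i+1))

/-- `σ` is an `n`-strategy: on every compatible path each removed set has cost at most `n`. -/
def DBound {S : Type} (σ : Strat S) (n : ℕ) : Prop :=
  ∀ π : MPath S, DCompat σ π → ∀ i, (π i).1.costLe (σ (π i)) n

/-! ### Angelic (SCL) paths -/

def AStep {S : Type} (σ : Strat S) (x y : PModel S) : Prop :=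
  y.1 = x.1.add (σ x) ∧ y.1.rel x.2 y.2

def ACompat {S : Type} (σ : Strat S) (π : MPath S) : Prop := ∀ i, AStep σ (π i) (π (i+1))

def ABound {S : Type} (σ : Strat S) (n : ℕ) : Prop :=
  ∀ π : MPath S, ACompat σ π → ∀ i, (π i).1.costLe (σ (π i)) n

/-! ### Update (SUL) paths: angel budget `n`, demon budget `m` -/

def UStep {S : Type} (Sa Sd : Strat S) (n m : ℕ) (x y : PModel S) : Prop :=
  x.1.costLe (Sa x) n ∧ x.1.costLe (Sd x) m ∧
  y.1 = (x.1.remove (Sd x)).add (Sa x) ∧ y.1.Serial ∧ y.1.rel x.2 y.2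

def UCompat {S : Type} (Sa Sd : Strat S) (n m : ℕ) (π : MPath S) : Prop :=
  ∀ i, UStep Sa Sd n m (π i) (π (i+1))

/-! ## SDL -/

mutual
inductive SDLF : Type
  | atom : ℕ → SDLF
  | neg : SDLF → SDLF
  | and : SDLF → SDLF → SDLF
  | dia : ℕ → SDLP → SDLF
inductive SDLP : Type
  | nxt : SDLF → SDLP
  | untl : SDLF → SDLF → SDLP
  | rls : SDLF → SDLF → SDLP
end

mutual
def SDLSat {S : Type} : PModel S → SDLF → Prop
  | Ms, .atom p => Ms.2 ∈ Ms.1.val p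
  | Ms, .neg φ => ¬ SDLSat Ms φ
  | Ms, .and φ χ => SDLSat Ms φ ∧ SDLSat Ms χ
  | Ms, .dia n ψ => ∃ σ : Strat S, IsDemonic σ ∧ DBound σ n ∧
      ∀ π : MPath S, π 0 = Ms → DCompat σ π → SDLPSat π ψ
def SDLPSat {S : Type} : MPath S → SDLP → Prop
  | π, .nxt φ => SDLSat (π 1) φ
  | π, .untl φ χ => ∃ j, SDLSat (π j) χ ∧ ∀ i < j, SDLSat (π i) φ
  | π, .rls φ χ => (∀ j, SDLSat (π j) χ) ∨ ∃ k, SDLSat (π k) φ ∧ ∀ i ≤ k, SDLSat (π i) χ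
end

/-! ## SCL -/

mutual
inductive SCLF : Type
  | atom : ℕ → SCLF
  | neg : SCLF → SCLF
  | and : SCLF → SCLF → SCLF
  | dia : ℕ → SCLP → SCLF
inductive SCLP : Type
  | nxt : SCLF → SCLP
  | untl : SCLF → SCLF → SCLP
  | rls : SCLF → SCLF → SCLP
end

mutual
def SCLSat {S : Type} : PModel S → SCLF → Prop
  | Ms, .atom p => Ms.2 ∈ Ms.1.val p
  | Ms, .neg φ => ¬ SCLSat Ms φ
  | Ms, .and φ χ => SCLSat Ms φ ∧ SCLSat Ms χ
  | Ms, .dia n ψ => ∃ σ : Strat S, IsAngelic σ ∧ ABound σ n ∧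
      ∀ π : MPath S, π 0 = Ms → ACompat σ π → SCLPSat π ψ
def SCLPSat {S : Type} : MPath S → SCLP → Prop
  | π, .nxt φ => SCLSat (π 1) φ
  | π, .untl φ χ => ∃ j, SCLSat (π j) χ ∧ ∀ i < j, SCLSat (π i) φ
  | π, .rls φ χ => (∀ j, SCLSat (π j) χ) ∨ ∃ k, SCLSat (π k) φ ∧ ∀ i ≤ k, SCLSat (π i) χ
end

/-! ## SUL -/

/-- Coalitions `C ⊆ {∠, ★}`. -/
inductive Coal : Type
  | both : Coal
  | onlyAngel : Coal
  | onlyDemon : Coal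
  | neither : Coal

mutual
inductive SULF : Type
  | atom : ℕ → SULF
  | neg : SULF → SULF
  | and : SULF → SULF → SULF
  | strat : Coal → ℕ → ℕ → SULP → SULF
inductive SULP : Type
  | nxt : SULF → SULP
  | untl : SULF → SULF → SULP
  | rls : SULF → SULF → SULP
end

mutual
def SULSat {S : Type} : PModel S → SULF → Prop
  | Ms, .atom p => Ms.2 ∈ Ms.1.val p
  | Ms, .neg φ => ¬ SULSat Ms φ
  | Ms, .and φ χ => SULSat Ms φ ∧ SULSat Ms χ
  | Ms, .strat .both n m ψ =>
      -- ⟨⟨∠ⁿ,★ᵐ⟩⟩ψ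
      ∃ Sa : Strat S, IsAngelic Sa ∧ ∃ Sd : Strat S, IsDemonic Sd ∧
        ∀ π : MPath S, π 0 = Ms → UCompat Sa Sd n m π → SULPSat π ψ
  | Ms, .strat .onlyAngel n m ψ =>
      -- ⟨⟨∠^{n,m}⟩⟩ψ : angel has budget n, demon budget m
      ∃ Sa : Strat S, IsAngelic Sa ∧ ∀ Sd : Strat S, IsDemonic Sd →
        ∀ π : MPath S, π 0 = Ms → UCompat Sa Sd n m π → SULPSat π ψ
  | Ms, .strat .onlyDemon n m ψ =>
      -- ⟨⟨★^{n,m}⟩⟩ψ : demon has budget n, angel budget m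
      ∃ Sd : Strat S, IsDemonic Sd ∧ ∀ Sa : Strat S, IsAngelic Sa →
        ∀ π : MPath S, π 0 = Ms → UCompat Sa Sd m n π → SULPSat π ψ
  | Ms, .strat .neither n m ψ =>
      -- ⟨⟨∅^{n,m}⟩⟩ψ
      ∀ Sa : Strat S, IsAngelic Sa → ∀ Sd : Strat S, IsDemonic Sd →
        ∀ π : MPath S, π 0 = Ms → UCompat Sa Sd n m π → SULPSat π ψ
def SULPSat {S : Type} : MPath S → SULP → Prop
  | π, .nxt φ => SULSat (π 1) φ
  | π, .untl φ χ => ∃ j, SULSat (π j) χ ∧ ∀ i < j, SULSat (π i) φ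
  | π, .rls φ χ => (∀ j, SULSat (π j) χ) ∨ ∃ k, SULSat (π k) φ ∧ ∀ i ≤ k, SULSat (π i) χ
end

/-! ## Obstruction Logic -/

mutual
inductive OLF : Type
  | atom : ℕ → OLF
  | neg : OLF → OLF
  | and : OLF → OLF → OLF
  | dia : ℕ → OLP → OLF
inductive OLP : Type
  | nxt : OLF → OLP
  | untl : OLF → OLF → OLP
  | rls : OLF → OLF → OLP
end

/-- An OL `n`-strategy over the fixed model `M`. -/
def IsOLStrategy {S : Type} (M : Mdl S) (σ : S → Set (S × S)) (n : ℕ) : Prop :=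
  ∀ s, σ s ⊆ {e : S × S | M.rel e.1 e.2} ∧ M.costLe (σ s) n ∧
    ∃ t, M.rel s t ∧ (s, t) ∉ σ s

def OLCompat {S : Type} (M : Mdl S) (σ : S → Set (S × S)) (π : ℕ → S) : Prop :=
  ∀ i, M.rel (π i) (π (i+1)) ∧ (π i, π (i+1)) ∉ σ (π i)

mutual
def OLSat {S : Type} (M : Mdl S) : S → OLF → Prop
  | s, .atom p => s ∈ M.val p
  | s, .neg φ => ¬ OLSat M s φ
  | s, .and φ χ => OLSat M s φ ∧ OLSat M s χ
  | s, .dia n ψ => ∃ σ : S → Set (S × S), IsOLStrategy M σ n ∧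
      ∀ π : ℕ → S, π 0 = s → OLCompat M σ π → OLPSat M π ψ
def OLPSat {S : Type} (M : Mdl S) : (ℕ → S) → OLP → Prop
  | π, .nxt φ => OLSat M (π 1) φ
  | π, .untl φ χ => ∃ j, OLSat M (π j) χ ∧ ∀ i < j, OLSat M (π i) φ
  | π, .rls φ χ => (∀ j, OLSat M (π j) χ) ∨ ∃ k, OLSat M (π k) φ ∧ ∀ i ≤ k, OLSat M (π i) χ
end

/-! ## CTL -/

inductive CTLF : Type
  | atom : ℕ → CTLF
  | neg : CTLF → CTLF
  | and : CTLF → CTLF → CTLF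
  | ax : CTLF → CTLF
  | ex : CTLF → CTLF
  | au : CTLF → CTLF → CTLF
  | ar : CTLF → CTLF → CTLF
  | eu : CTLF → CTLF → CTLF
  | er : CTLF → CTLF → CTLF

def IsPath {S : Type} (M : Mdl S) (π : ℕ → S) : Prop := ∀ i, M.rel (π i) (π (i+1))

def CTLSat {S : Type} (M : Mdl S) : S → CTLF → Prop
  | s, .atom p => s ∈ M.val p
  | s, .neg φ => ¬ CTLSat M s φ
  | s, .and φ χ => CTLSat M s φ ∧ CTLSat M s χ
  | s, .ax φ => ∀ π : ℕ → S, π 0 = s → IsPath M π → CTLSat M (π 1) φ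
  | s, .ex φ => ∃ π : ℕ → S, π 0 = s ∧ IsPath M π ∧ CTLSat M (π 1) φ
  | s, .au φ χ => ∀ π : ℕ → S, π 0 = s → IsPath M π →
      ∃ j, CTLSat M (π j) χ ∧ ∀ i < j, CTLSat M (π i) φ
  | s, .ar φ χ => ∀ π : ℕ → S, π 0 = s → IsPath M π →
      ((∀ j, CTLSat M (π j) χ) ∨ ∃ k, CTLSat M (π k) φ ∧ ∀ i ≤ k, CTLSat M (π i) χ)
  | s, .eu φ χ => ∃ π : ℕ → S, π 0 = s ∧ IsPath M π ∧
      ∃ j, CTLSat M (π j) χ ∧ ∀ i < j, CTLSat M (π i) φ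
  | s, .er φ χ => ∃ π : ℕ → S, π 0 = s ∧ IsPath M π ∧
      ((∀ j, CTLSat M (π j) χ) ∨ ∃ k, CTLSat M (π k) φ ∧ ∀ i ≤ k, CTLSat M (π i) χ)

/-! ## Statement 1: CTL ≺ SCL -/

/-- The recursive translation from CTL to SCL. -/
def ctlToSCL : CTLF → SCLF
  | .atom p => .atom p
  | .neg φ => .neg (ctlToSCL φ)
  | .and φ χ => .and (ctlToSCL φ) (ctlToSCL χ)
  | .ax φ => .dia 0 (.nxt (ctlToSCL φ))
  | .au φ χ => .dia 0 (.untl (ctlToSCL φ) (ctlToSCL χ))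
  | .ar φ χ => .dia 0 (.rls (ctlToSCL φ) (ctlToSCL χ))
  | .ex φ => .neg (.dia 0 (.nxt (.neg (ctlToSCL φ))))
  | .eu φ χ => .neg (.dia 0 (.rls (.neg (ctlToSCL φ)) (.neg (ctlToSCL χ))))
  | .er φ χ => .neg (.dia 0 (.untl (.neg (ctlToSCL φ)) (.neg (ctlToSCL χ))))

/-- The SCL formula `⟨∠¹⟩X[∠⁰]X¬p`, where `[∠⁰]X¬p = ¬⟨∠⁰⟩¬(X¬p) = ¬⟨∠⁰⟩Xp`
and `p` is atom `0`. -/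
def sclWitness : SCLF :=
  SCLF.dia 1 (SCLP.nxt (SCLF.neg (SCLF.dia 0 (SCLP.nxt (SCLF.atom 0)))))

/-! With positive costs an angelic `0`-strategy can add no edge, so `⟨∠⁰⟩` quantifies over the
paths of the model itself, exactly like `A`; the existential CTL operators are then obtained by
`U`/`R` duality.

CTL does not see costs. Take the model `0 → 1`, with every other state looping and `p` true only
at `1`. If edges cost `1`, the angel adds `1 → 2` in the first step, after which the path
`1, 2, 2, …` leaves `p`, so `⟨∠¹⟩X[∠⁰]X¬p` holds at `0`. If edges cost `2`, the angel cannot add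
anything and from `1` every path stays at `1`, so the formula fails at `0`. -/

namespace Mdl
variable {S : Type}

@[simp]
lemma add_empty (M : Mdl S) : M.add ∅ = M := by
  cases M; simp [add]

lemma rel_add_of_rel (M : Mdl S) (A : Set (S × S)) {a b : S} (h : M.rel a b) :
    (M.add A).rel a b :=
  Or.inl h

lemma IsModel.add {M : Mdl S} (hM : M.IsModel) (A : Set (S × S)) : (M.add A).IsModel :=
  ⟨fun s => (hM.1 s).imp fun _ => Or.inl, hM.2⟩

lemma costLe_empty (M : Mdl S) (n : ℕ) : M.costLe ∅ n :=
  ⟨∅, by simp, by simp⟩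

lemma eq_empty_of_costLe {M : Mdl S} {n : ℕ} (hc : ∀ a b, n < M.cost a b)
    {A : Set (S × S)} (hA : M.costLe A n) : A = ∅ := by
  obtain ⟨F, rfl, hF⟩ := hA
  rw [Finset.coe_eq_empty, ← Finset.not_nonempty_iff_eq_empty]
  rintro ⟨e, he⟩
  have := Finset.single_le_sum (f := fun x : S × S => M.cost x.1 x.2) (by simp) he
  have := hc e.1 e.2
  omega

end Mdl

section Angelic
variable {S : Type}

def playAlong (σ : Strat S) (M : Mdl S) (π : ℕ → S) : MPath S
  | 0 => (M, π 0)
  | n + 1 => ((playAlong σ M π n).1.add (σ (playAlong σ M π n)), π (n + 1))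

lemma playAlong_cost (σ : Strat S) (M : Mdl S) (π : ℕ → S) (n : ℕ) :
    (playAlong σ M π n).1.cost = M.cost := by
  induction n with
  | zero => rfl
  | succ n ih => exact ih

lemma playAlong_snd (σ : Strat S) (M : Mdl S) (π : ℕ → S) (n : ℕ) :
    (playAlong σ M π n).2 = π n := by
  cases n <;> rfl

lemma playAlong_rel_of_rel (σ : Strat S) {M : Mdl S} (π : ℕ → S) (n : ℕ) {a b : S}
    (h : M.rel a b) : (playAlong σ M π n).1.rel a b := by
  induction n with
  | zero => exact h
  | succ n ih => exact Mdl.rel_add_of_rel _ _ ih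

lemma aCompat_playAlong (σ : Strat S) {M : Mdl S} {π : ℕ → S} (hπ : IsPath M π) :
    ACompat σ (playAlong σ M π) := fun n =>
  ⟨rfl, Mdl.rel_add_of_rel _ _ (playAlong_snd σ M π n ▸ playAlong_rel_of_rel σ π n (hπ n))⟩

/-- The strategy cannot afford any edge, so it never changes the model. -/
lemma aCompat_const_of_cost_gt {σ : Strat S} {n : ℕ} (hσ : ABound σ n) {M : Mdl S}
    (hc : ∀ a b, n < M.cost a b) {π : ℕ → S} (hπ : IsPath M π) :
    ACompat σ (fun i => (M, π i)) := by
  have hempty : ∀ i, σ (playAlong σ M π i) = ∅ := fun i =>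
    Mdl.eq_empty_of_costLe (by rw [playAlong_cost]; exact hc) (hσ _ (aCompat_playAlong σ hπ) i)
  have hrun : playAlong σ M π = fun i => (M, π i) := by
    funext i
    induction i with
    | zero => rfl
    | succ i ih =>
      show ((playAlong σ M π i).1.add (σ (playAlong σ M π i)), π (i + 1)) = _
      rw [hempty, ih, Mdl.add_empty]
  rw [← hrun]
  exact aCompat_playAlong σ hπ

lemma ACompat.fst_eq_of_empty {π : MPath S} (hπ : ACompat (fun _ => ∅) π) (i : ℕ) :
    (π i).1 = (π 0).1 := by
  induction i with
  | zero => rfl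
  | succ i ih => rw [(hπ i).1, ih, Mdl.add_empty]

lemma sclSat_neg {Ms : PModel S} {φ : SCLF} : SCLSat Ms (.neg φ) ↔ ¬ SCLSat Ms φ := by
  rw [SCLSat]

lemma sclSat_dia_zero_iff {M : Mdl S} (hM : M.IsModel) {s : S} {ψ : SCLP} :
    SCLSat (M, s) (.dia 0 ψ) ↔
      ∀ π : ℕ → S, π 0 = s → IsPath M π → SCLPSat (fun i => (M, π i)) ψ := by
  rw [SCLSat]
  constructor
  · rintro ⟨σ, -, hσ, hψ⟩ π rfl hπ
    exact hψ _ rfl (aCompat_const_of_cost_gt hσ hM.2 hπ)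
  · intro hψ
    refine ⟨fun _ => ∅, fun _ => Set.empty_subset _, fun _ _ _ => Mdl.costLe_empty _ 0, ?_⟩
    intro π hπ0 hπ
    have hfst : ∀ i, (π i).1 = M := fun i => by rw [hπ.fst_eq_of_empty, hπ0]
    have hπM : π = fun i => (M, (π i).2) := funext fun i => Prod.ext (hfst i) rfl
    refine hπM ▸ hψ _ (by rw [hπ0]) fun i => ?_
    simpa [hfst] using (hπ i).2

end Angelic

/-- `¬(φ U χ) ≡ ¬φ R ¬χ` -/
lemma not_until_iff_release_not (A C : ℕ → Prop) :
    ¬ (∃ j, C j ∧ ∀ i < j, A i) ↔ (∀ j, ¬ C j) ∨ ∃ k, ¬ A k ∧ ∀ i ≤ k, ¬ C i := by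
  classical
  constructor
  · intro h
    by_cases hC : ∃ j, C j
    · obtain ⟨k, hk, hkA⟩ : ∃ k < Nat.find hC, ¬ A k := by
        by_contra! hA
        exact h ⟨_, Nat.find_spec hC, hA⟩
      exact Or.inr ⟨k, hkA, fun i hi hCi => Nat.find_min hC (by omega) hCi⟩
    · exact Or.inl (not_exists.mp hC)
  · rintro (h | ⟨k, hkA, hk⟩) ⟨j, hCj, hA⟩
    · exact h j hCj
    · rcases le_or_gt j k with hjk | hkj
      · exact hk j hjk hCj
      · exact hkA (hA k hkj)

lemma ctlSat_iff_sclSat_ctlToSCL {S : Type} {M : Mdl S} (hM : M.IsModel) (φ : CTLF) (s : S) :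
    CTLSat M s φ ↔ SCLSat (M, s) (ctlToSCL φ) := by
  induction φ generalizing s with
  | atom p => rfl
  | neg φ ih => simp only [CTLSat, ctlToSCL, sclSat_neg, ih]
  | and φ χ ihφ ihχ => simp only [CTLSat, ctlToSCL, SCLSat, ihφ, ihχ]
  | ax φ ih => simp only [CTLSat, ctlToSCL, sclSat_dia_zero_iff hM, SCLPSat, ih]
  | au φ χ ihφ ihχ => simp only [CTLSat, ctlToSCL, sclSat_dia_zero_iff hM, SCLPSat, ihφ, ihχ]
  | ar φ χ ihφ ihχ => simp only [CTLSat, ctlToSCL, sclSat_dia_zero_iff hM, SCLPSat, ihφ, ihχ]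
  | ex φ ih =>
    simp only [CTLSat, ctlToSCL, sclSat_neg, sclSat_dia_zero_iff hM, SCLPSat, ih, not_forall,
      exists_prop, not_not]
  | eu φ χ ihφ ihχ =>
    simp only [CTLSat, ctlToSCL, sclSat_neg, sclSat_dia_zero_iff hM, SCLPSat, ihφ, ihχ,
      not_forall, exists_prop, ← not_until_iff_release_not, not_not]
  | er φ χ ihφ ihχ =>
    simp only [CTLSat, ctlToSCL, sclSat_neg, sclSat_dia_zero_iff hM, SCLPSat, ihφ, ihχ,
      not_forall, exists_prop, not_until_iff_release_not, not_not]

lemma ctlSat_withCost {S : Type} (M : Mdl S) (c : S → S → ℕ) (ψ : CTLF) (s : S) :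
    CTLSat { M with cost := c } s ψ ↔ CTLSat M s ψ := by
  induction ψ generalizing s <;> simp only [CTLSat, IsPath, *]

def loopModel (c : ℕ) : Mdl ℕ :=
  ⟨fun a b => (a = 0 ∧ b = 1) ∨ (a ≠ 0 ∧ b = a), fun _ => {1}, fun _ _ => c⟩

lemma loopModel_isModel {c : ℕ} (hc : 0 < c) : (loopModel c).IsModel := by
  refine ⟨fun s => ?_, fun _ _ => hc⟩
  rcases eq_or_ne s 0 with rfl | hs
  exacts [⟨1, Or.inl ⟨rfl, rfl⟩⟩, ⟨s, Or.inr ⟨hs, rfl⟩⟩]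

lemma isPath_loopModel_zero (c : ℕ) : IsPath (loopModel c) fun i => min i 1 := by
  rintro (_ | i) <;> simp [loopModel]

lemma not_sclSat_loopModel_two : ¬ SCLSat (loopModel 2, 0) sclWitness := by
  rintro ⟨σ, -, hσ, hψ⟩
  have hstep := hψ (fun i => (loopModel 2, min i 1)) rfl
    (aCompat_const_of_cost_gt hσ (fun _ _ => Nat.one_lt_two) (isPath_loopModel_zero 2))
  simp only [SCLPSat, sclSat_neg, sclSat_dia_zero_iff (loopModel_isModel two_pos)] at hstep
  refine hstep fun π hπ0 hπ => ?_
  have h : π 1 = 1 := by simpa [loopModel, hπ0] using hπ 0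
  simp [SCLSat, loopModel, h]

lemma sclSat_loopModel_one : SCLSat (loopModel 1, 0) sclWitness := by
  classical
  set M' := (loopModel 1).add {(1, 2)}
  refine ⟨fun x => if x = (loopModel 1, 0) then {(1, 2)} else ∅, fun x => ?_, fun π _ i => ?_, ?_⟩
  · dsimp only
    split_ifs with hx
    · simp [hx, loopModel]
    · exact Set.empty_subset _
  · dsimp only
    split_ifs with hx
    · exact hx ▸ ⟨{(1, 2)}, by simp, by simp [loopModel]⟩
    · exact Mdl.costLe_empty _ 1
  intro π hπ0 hπ
  have hM' : (π 1).1 = M' := by simpa [hπ0] using (hπ 0).1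
  have hs : (π 1).2 = 1 := by simpa [hπ0, hM', M', Mdl.add, loopModel] using (hπ 0).2
  have hesc : IsPath M' fun i => min (i + 1) 2 := by
    rintro (_ | i) <;> simp [M', Mdl.add, loopModel]
  rw [SCLPSat, sclSat_neg, ← Prod.mk.eta (p := π 1), hM', hs,
    sclSat_dia_zero_iff ((loopModel_isModel one_pos).add _)]
  intro h
  simpa [SCLSat, SCLPSat, M', Mdl.add, loopModel] using h _ rfl hesc

/-- CTL is strictly less expressive than SCL: (i) the translation maps every CTL
formula to an equivalent SCL formula; (ii) the SCL formula `⟨∠¹⟩X[∠⁰]X¬p` has no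
equivalent CTL formula. -/
theorem ctl_strictly_less_expressive_than_SCL :
    (∀ φ : CTLF, ∀ (S : Type) (M : Mdl S), M.IsModel → ∀ s : S,
        CTLSat M s φ ↔ SCLSat (M, s) (ctlToSCL φ)) ∧
    ¬ ∃ ψ : CTLF, ∀ (S : Type) (M : Mdl S), M.IsModel → ∀ s : S,
        SCLSat (M, s) sclWitness ↔ CTLSat M s ψ := by
  refine ⟨fun φ S M hM s => ctlSat_iff_sclSat_ctlToSCL hM φ s, ?_⟩
  rintro ⟨ψ, hψ⟩
  have hone : CTLSat (loopModel 1) 0 ψ :=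
    (hψ ℕ _ (loopModel_isModel one_pos) 0).mp sclSat_loopModel_one
  have htwo : CTLSat (loopModel 2) 0 ψ := (ctlSat_withCost (loopModel 1) _ ψ 0).mpr hone
  exact not_sclSat_loopModel_two ((hψ ℕ _ (loopModel_isModel two_pos) 0).mpr htwo)
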